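/- arXiv:1507.08554 — 3 statements merged into one kernel-verified Lean document; each statement's English description precedes it below -/
import Mathlib

section
/- One-step contraction identity for the proportional coupling (squared-coordinate form): Let n ≥ 2 and let a, b ∈ ℝ^n be vectors with Σ_{k=1}^n a[k] = Σ_{k=1}^n b[k]. Choose a pair (i, j) uniformly at random among pairs 1 ≤ i < j ≤ n and, independently, φ uniform on [0, 2π). Define a' by a'[i] = (a[i] + a[j])·cos(φ)^2, a'[j] = (a[i] + a[j])·sin(φ)^2, and a'[k] = a[k] for k ∉ {i, j}; define b' from b using the same i, j, φ. Then E[ Σ_{k=1}^n (a'[k] − b'[k])^2 ] = (1 − 1/(2n) − 3/(2n(n−1))) · Σ_{k=1}^n (a[k] − b[k])^2. -/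
open MeasureTheory

noncomputable section

/-- The action of one step of Kac's walk on the vector of squared coordinates: when
coordinates `i, j` are rotated by the angle `φ` starting from squared coordinates `a`,
the new squared coordinates are `a' i = (a i + a j)·cos²φ`, `a' j = (a i + a j)·sin²φ`,
and `a' k = a k` for `k ∉ {i, j}`. -/
def sqStep (n : ℕ) (a : Fin n → ℝ) (i j : Fin n) (φ : ℝ) : Fin n → ℝ :=
  fun k =>
    if k = i then (a i + a j) * Real.cos φ ^ 2
    else if k = j then (a i + a j) * Real.sin φ ^ 2
    else a k

lemma int_cos4 : ∫ φ in (0:ℝ)..(2*Real.pi), Real.cos φ ^ 4 = 3 * Real.pi / 4 := by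
  rw [show (4:ℕ) = 2 + 2 from rfl, integral_cos_pow]
  simp [Real.sin_two_pi, Real.cos_two_pi]
  ring

lemma int_sin4 : ∫ φ in (0:ℝ)..(2*Real.pi), Real.sin φ ^ 4 = 3 * Real.pi / 4 := by
  rw [show (4:ℕ) = 2 + 2 from rfl, integral_sin_pow]
  simp [Real.sin_two_pi, Real.cos_two_pi]
  ring

lemma inner_avg (n : ℕ) (a b : Fin n → ℝ) (i j : Fin n) (hij : i ≠ j) :
    (2 * Real.pi)⁻¹ *
        ∫ φ in (0:ℝ)..(2*Real.pi),
          ∑ k, (sqStep n a i j φ k - sqStep n b i j φ k) ^ 2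
      = (∑ k, (a k - b k) ^ 2) - ((a i - b i) ^ 2 + (a j - b j) ^ 2) / 4
        + 3 / 2 * ((a i - b i) * (a j - b j)) := by
  set D : ℝ := (a i + a j) - (b i + b j) with hD
  set K : ℝ := (∑ k, (a k - b k) ^ 2) - (a i - b i) ^ 2 - (a j - b j) ^ 2 with hK
  have hstep : ∀ φ : ℝ,
      ∑ k, (sqStep n a i j φ k - sqStep n b i j φ k) ^ 2
        = D ^ 2 * (Real.cos φ ^ 4 + Real.sin φ ^ 4) + K := by
    intro φ
    have key : ∀ k : Fin n,
        (sqStep n a i j φ k - sqStep n b i j φ k) ^ 2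
          = (a k - b k) ^ 2
            + (if k = i then D ^ 2 * Real.cos φ ^ 4 - (a i - b i) ^ 2 else 0)
            + (if k = j then D ^ 2 * Real.sin φ ^ 4 - (a j - b j) ^ 2 else 0) := by
      intro k
      by_cases hk : k = i
      · subst hk
        have h1 : sqStep n a k j φ k = (a k + a j) * Real.cos φ ^ 2 := by simp [sqStep]
        have h2 : sqStep n b k j φ k = (b k + b j) * Real.cos φ ^ 2 := by simp [sqStep]
        rw [h1, h2, if_pos rfl, if_neg hij]
        ring
      · by_cases hk' : k = j
        · subst hk'
          have h1 : sqStep n a i k φ k = (a i + a k) * Real.sin φ ^ 2 := by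
            simp [sqStep, hk]
          have h2 : sqStep n b i k φ k = (b i + b k) * Real.sin φ ^ 2 := by
            simp [sqStep, hk]
          rw [h1, h2, if_neg hk, if_pos rfl]
          ring
        · have h1 : sqStep n a i j φ k = a k := by simp [sqStep, hk, hk']
          have h2 : sqStep n b i j φ k = b k := by simp [sqStep, hk, hk']
          rw [h1, h2, if_neg hk, if_neg hk']
          ring
    rw [Finset.sum_congr rfl (fun k _ => key k), Finset.sum_add_distrib,
      Finset.sum_add_distrib, Finset.sum_ite_eq' Finset.univ i,
      Finset.sum_ite_eq' Finset.univ j]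
    simp only [Finset.mem_univ, if_pos]
    rw [hK]
    ring
  have hI : (∫ φ in (0:ℝ)..(2*Real.pi),
      ∑ k, (sqStep n a i j φ k - sqStep n b i j φ k) ^ 2)
      = ∫ φ in (0:ℝ)..(2*Real.pi), (D ^ 2 * (Real.cos φ ^ 4 + Real.sin φ ^ 4) + K) := by
    exact intervalIntegral.integral_congr (fun φ _ => hstep φ)
  rw [hI]
  have hc4 : IntervalIntegrable (fun φ : ℝ => Real.cos φ ^ 4) volume 0 (2*Real.pi) :=
    (Continuous.pow Real.continuous_cos 4).intervalIntegrable _ _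
  have hs4 : IntervalIntegrable (fun φ : ℝ => Real.sin φ ^ 4) volume 0 (2*Real.pi) :=
    (Continuous.pow Real.continuous_sin 4).intervalIntegrable _ _
  have h1 : IntervalIntegrable
      (fun φ : ℝ => D ^ 2 * (Real.cos φ ^ 4 + Real.sin φ ^ 4)) volume 0 (2*Real.pi) :=
    (continuous_const.mul
      ((Real.continuous_cos.pow 4).add (Real.continuous_sin.pow 4))).intervalIntegrable _ _
  rw [intervalIntegral.integral_add h1 intervalIntegrable_const,
    intervalIntegral.integral_const_mul,
    intervalIntegral.integral_add hc4 hs4, int_cos4, int_sin4,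
    intervalIntegral.integral_const]
  have hπ : Real.pi ≠ 0 := Real.pi_ne_zero
  rw [hK, hD]
  field_simp
  ring

lemma sum_pairs {n : ℕ} (f : Fin n → Fin n → ℝ) (hf : ∀ i j, f i j = f j i) :
    2 * ∑ p ∈ Finset.filter (fun p : Fin n × Fin n => p.1 < p.2) Finset.univ, f p.1 p.2
      = (∑ i, ∑ j, f i j) - ∑ i, f i i := by
  classical
  have htot : (∑ i, ∑ j, f i j) = ∑ p : Fin n × Fin n, f p.1 p.2 := by
    rw [← Finset.sum_product']
    rfl
  have hsplit : (∑ p : Fin n × Fin n, f p.1 p.2)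
      = (∑ p ∈ Finset.filter (fun p : Fin n × Fin n => p.1 < p.2) Finset.univ, f p.1 p.2)
        + ∑ p ∈ Finset.filter (fun p : Fin n × Fin n => ¬ p.1 < p.2) Finset.univ, f p.1 p.2 :=
    (Finset.sum_filter_add_sum_filter_not _ _ _).symm
  have hsplit2 : (∑ p ∈ Finset.filter (fun p : Fin n × Fin n => ¬ p.1 < p.2) Finset.univ, f p.1 p.2)
      = (∑ p ∈ Finset.filter (fun p : Fin n × Fin n => p.2 < p.1) Finset.univ, f p.1 p.2)
        + ∑ i, f i i := by
    have e1 : Finset.filter (fun p : Fin n × Fin n => p.2 < p.1)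
        (Finset.filter (fun p : Fin n × Fin n => ¬ p.1 < p.2) Finset.univ)
        = Finset.filter (fun p : Fin n × Fin n => p.2 < p.1) Finset.univ := by
      rw [Finset.filter_filter]
      apply Finset.filter_congr
      intro p _
      constructor
      · exact fun h => h.2
      · exact fun h => ⟨asymm h, h⟩
    have e2 : Finset.filter (fun p : Fin n × Fin n => ¬ p.2 < p.1)
        (Finset.filter (fun p : Fin n × Fin n => ¬ p.1 < p.2) Finset.univ)
        = Finset.filter (fun p : Fin n × Fin n => p.1 = p.2) Finset.univ := by
      rw [Finset.filter_filter]
      apply Finset.filter_congr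
      intro p _
      constructor
      · exact fun h => le_antisymm (not_lt.mp h.2) (not_lt.mp h.1)
      · exact fun h => ⟨by rw [h]; exact lt_irrefl _, by rw [h]; exact lt_irrefl _⟩
    have := (Finset.sum_filter_add_sum_filter_not
      (Finset.filter (fun p : Fin n × Fin n => ¬ p.1 < p.2) Finset.univ)
      (fun p : Fin n × Fin n => p.2 < p.1) (fun p => f p.1 p.2)).symm
    rw [this, e1, e2]
    congr 1
    have hdg : Finset.filter (fun p : Fin n × Fin n => p.1 = p.2) Finset.univ
        = (Finset.univ : Finset (Fin n)).diag := by
      ext p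
      simp [Finset.mem_diag]
    rw [hdg, Finset.sum_diag]
  have hswap : (∑ p ∈ Finset.filter (fun p : Fin n × Fin n => p.2 < p.1) Finset.univ, f p.1 p.2)
      = ∑ p ∈ Finset.filter (fun p : Fin n × Fin n => p.1 < p.2) Finset.univ, f p.1 p.2 := by
    refine Finset.sum_equiv (Equiv.prodComm (Fin n) (Fin n)) ?_ ?_
    · intro p; simp
    · intro p hp; exact hf p.1 p.2
  rw [htot, hsplit, hsplit2, hswap]
  ring

/-- One-step contraction identity for the proportional coupling (squared-coordinate form):
averaging over a uniformly random pair `i < j` and an independent uniform angle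
`φ ∈ [0, 2π)`,
`E[ ∑ k (a' k − b' k)² ] = (1 − 1/(2n) − 3/(2n(n−1))) · ∑ k (a k − b k)²`
whenever `∑ k a k = ∑ k b k`. -/
theorem kac_one_step_contraction (n : ℕ) (hn : 2 ≤ n) (a b : Fin n → ℝ)
    (hsum : ∑ k, a k = ∑ k, b k) :
    (n.choose 2 : ℝ)⁻¹ *
        ∑ p ∈ Finset.filter (fun p : Fin n × Fin n => p.1 < p.2) Finset.univ,
          (2 * Real.pi)⁻¹ *
            ∫ φ in (0 : ℝ)..(2 * Real.pi),
              ∑ k, (sqStep n a p.1 p.2 φ k - sqStep n b p.1 p.2 φ k) ^ 2 =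
      (1 - 1 / (2 * (n : ℝ)) - 3 / (2 * (n : ℝ) * ((n : ℝ) - 1))) *
        ∑ k, (a k - b k) ^ 2 := by
  classical
  set c : Fin n → ℝ := fun k => a k - b k with hc
  have hT : ∑ k, c k = 0 := by
    simp only [hc, Finset.sum_sub_distrib, hsum, sub_self]
  set S : ℝ := ∑ k, c k ^ 2 with hS
  set g : Fin n → Fin n → ℝ :=
    fun i j => S - (c i ^ 2 + c j ^ 2) / 4 + 3 / 2 * (c i * c j) with hg
  have hrw : (∑ p ∈ Finset.filter (fun p : Fin n × Fin n => p.1 < p.2) Finset.univ,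
      (2 * Real.pi)⁻¹ *
        ∫ φ in (0 : ℝ)..(2 * Real.pi),
          ∑ k, (sqStep n a p.1 p.2 φ k - sqStep n b p.1 p.2 φ k) ^ 2)
      = ∑ p ∈ Finset.filter (fun p : Fin n × Fin n => p.1 < p.2) Finset.univ, g p.1 p.2 := by
    refine Finset.sum_congr rfl ?_
    intro p hp
    have hij : p.1 ≠ p.2 := ne_of_lt (Finset.mem_filter.mp hp).2
    rw [inner_avg n a b p.1 p.2 hij]
  rw [hrw]
  have hgsym : ∀ i j, g i j = g j i := by
    intro i j; simp only [hg]; ring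
  have hpairs := sum_pairs g hgsym
  have hrow : ∀ i : Fin n, ∑ j, g i j = (n : ℝ) * (S - c i ^ 2 / 4) - S / 4 := by
    intro i
    have : ∀ j, g i j = (S - c i ^ 2 / 4) + ((-(1/4)) * c j ^ 2 + (3 / 2 * c i) * c j) := by
      intro j; simp only [hg]; ring
    rw [Finset.sum_congr rfl (fun j _ => this j), Finset.sum_add_distrib,
      Finset.sum_add_distrib, ← Finset.mul_sum, ← Finset.mul_sum, Finset.sum_const,
      Finset.card_univ, Fintype.card_fin, nsmul_eq_mul, ← hS, hT]
    ring
  have hdouble : (∑ i, ∑ j, g i j) = (n : ℝ) ^ 2 * S - (n : ℝ) * S / 2 := by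
    rw [Finset.sum_congr rfl (fun i _ => hrow i), Finset.sum_sub_distrib,
      ← Finset.mul_sum, Finset.sum_sub_distrib, Finset.sum_const, Finset.card_univ,
      Fintype.card_fin, nsmul_eq_mul, ← Finset.sum_div, ← hS, Finset.sum_const,
      Finset.card_univ, Fintype.card_fin, nsmul_eq_mul]
    ring
  have hdiag : (∑ i, g i i) = (n : ℝ) * S + S := by
    have : ∀ i, g i i = S + c i ^ 2 := by intro i; simp only [hg]; ring
    rw [Finset.sum_congr rfl (fun i _ => this i), Finset.sum_add_distrib,
      Finset.sum_const, Finset.card_univ, Fintype.card_fin, nsmul_eq_mul, ← hS]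
  have hval : (∑ p ∈ Finset.filter (fun p : Fin n × Fin n => p.1 < p.2) Finset.univ, g p.1 p.2)
      = ((n : ℝ) ^ 2 * S - (n : ℝ) * S / 2 - ((n : ℝ) * S + S)) / 2 := by
    rw [hdouble, hdiag] at hpairs
    linarith
  rw [hval, Nat.cast_choose_two]
  have hn0 : (n : ℝ) ≠ 0 := by positivity
  have hn1 : (n : ℝ) - 1 ≠ 0 := by
    have : (2 : ℝ) ≤ (n : ℝ) := by exact_mod_cast hn
    linarith [this]
  field_simp
  ring

end
end

section
/- Contraction estimate (Lemma 3.1): For every n ≥ 2 and every pair of starting points X_0, Y_0 ∈ S^{n-1}, there exists a coupling of two copies {X_t}, {Y_t} of Kac's walk on S^{n-1} (i.e., a Markov chain on S^{n-1} × S^{n-1} each of whose coordinate marginal transition laws is the Kac kernel K) such that for every t ≥ 0, E[ Σ_{i=1}^n (X_t[i]^2 − Y_t[i]^2)^2 ] ≤ 2·(1 − 1/(2n))^t. -/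
open MeasureTheory Filter
open scoped ENNReal

noncomputable section

/-- The unit sphere `S^{n-1} = {x ∈ ℝ^n : ∑ i, x i ^ 2 = 1}`. -/
def unitSphere (n : ℕ) : Set (Fin n → ℝ) := {x | ∑ i, x i ^ 2 = 1}

/-- One step of Kac's walk: rotate coordinates `i, j` by the angle `θ`. -/
def kacUpdate (n : ℕ) (i j : Fin n) (θ : ℝ) (x : Fin n → ℝ) : Fin n → ℝ :=
  fun k =>
    if k = i then Real.cos θ * x i - Real.sin θ * x j
    else if k = j then Real.sin θ * x i + Real.cos θ * x j
    else x k

/-- The uniform distribution on the pairs `{(i,j) : 1 ≤ i < j ≤ n}`. -/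
def uniformPairs (n : ℕ) : Measure (Fin n × Fin n) :=
  (n.choose 2 : ℝ≥0∞)⁻¹ •
    ∑ p ∈ Finset.filter (fun p : Fin n × Fin n => p.1 < p.2) Finset.univ, Measure.dirac p

/-- The uniform distribution on the angles `[0, 2π)`. -/
def uniformAngle : Measure ℝ :=
  (ENNReal.ofReal (2 * Real.pi))⁻¹ • volume.restrict (Set.Ico 0 (2 * Real.pi))

/-- The transition kernel `K(x, ·)` of Kac's walk: the law of one step started from `x`,
where the pair of coordinates and the angle are chosen uniformly at random. -/
def kacKernel (n : ℕ) (x : Fin n → ℝ) : Measure (Fin n → ℝ) :=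
  Measure.map (fun q : (Fin n × Fin n) × ℝ => kacUpdate n q.1.1 q.1.2 q.2 x)
    ((uniformPairs n).prod uniformAngle)

/-- The `t`-step law `δ_x K^t` of Kac's walk started from `x`. -/
def kacWalk (n : ℕ) : ℕ → (Fin n → ℝ) → Measure (Fin n → ℝ)
  | 0, x => Measure.dirac x
  | (t + 1), x => (kacWalk n t x).bind (kacKernel n)

/-- Total variation distance between two measures: `sup_A (μ(A) - ν(A))`. -/
def tvDist {α : Type*} [MeasurableSpace α] (μ ν : Measure α) : ℝ :=
  ⨆ A : {s : Set α // MeasurableSet s}, ((μ A).toReal - (ν A).toReal)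

/-- The law at time `t` of a Markov chain with one-step transition law `Q` started at `z`. -/
def chainLaw {α : Type*} [MeasurableSpace α] (Q : α → Measure α) (z : α) : ℕ → Measure α
  | 0 => Measure.dirac z
  | (t + 1) => (chainLaw Q z t).bind Q

namespace Kac
open Real

variable {n : ℕ}

abbrev Z (n : ℕ) := (Fin n → ℝ) × (Fin n → ℝ)

def pairFinset (n : ℕ) : Finset (Fin n × Fin n) :=
  Finset.filter (fun p : Fin n × Fin n => p.1 < p.2) Finset.univ

lemma sum_pairs_eq (F : Fin n → Fin n → ℝ) (hsym : ∀ i j, F i j = F j i) :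
    2 * ∑ p ∈ pairFinset n, F p.1 p.2 = (∑ i, ∑ j, F i j) - ∑ i, F i i := by
  classical
  have h1 : ∑ p : Fin n × Fin n, F p.1 p.2 = ∑ i, ∑ j, F i j := by
    rw [← Finset.univ_product_univ, Finset.sum_product]
  have h2 := Finset.sum_filter_add_sum_filter_not (Finset.univ : Finset (Fin n × Fin n))
    (fun p => p.1 < p.2) (fun p => F p.1 p.2)
  have h3 := Finset.sum_filter_add_sum_filter_not
    (Finset.univ.filter fun p : Fin n × Fin n => ¬ p.1 < p.2) (fun p => p.2 < p.1)
    (fun p => F p.1 p.2)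
  have e1 : (Finset.univ.filter fun p : Fin n × Fin n => ¬ p.1 < p.2).filter
      (fun p => p.2 < p.1) = Finset.univ.filter (fun p : Fin n × Fin n => p.2 < p.1) := by
    rw [Finset.filter_filter]
    apply Finset.filter_congr
    intro p _
    constructor
    · rintro ⟨_, h⟩; exact h
    · intro h; exact ⟨asymm h, h⟩
  have e2 : (Finset.univ.filter fun p : Fin n × Fin n => ¬ p.1 < p.2).filter
      (fun p => ¬ p.2 < p.1) = Finset.univ.filter (fun p : Fin n × Fin n => p.1 = p.2) := by
    rw [Finset.filter_filter]
    apply Finset.filter_congr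
    intro p _
    constructor
    · rintro ⟨h1', h2'⟩; exact le_antisymm (not_lt.1 h2') (not_lt.1 h1')
    · intro h; rw [h]; exact ⟨lt_irrefl _, lt_irrefl _⟩
  have hswap : ∑ p ∈ Finset.univ.filter (fun p : Fin n × Fin n => p.2 < p.1), F p.1 p.2
      = ∑ p ∈ pairFinset n, F p.1 p.2 := by
    refine Finset.sum_nbij' (i := Prod.swap) (j := Prod.swap) ?_ ?_ ?_ ?_ ?_
    · intro p hp
      simp only [Finset.mem_filter, Finset.mem_univ, true_and, pairFinset,
        Prod.fst_swap, Prod.snd_swap] at hp ⊢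
      exact hp
    · intro p hp
      simp only [Finset.mem_filter, Finset.mem_univ, true_and, pairFinset,
        Prod.fst_swap, Prod.snd_swap] at hp ⊢
      exact hp
    · intro p _; exact Prod.swap_swap p
    · intro p _; exact Prod.swap_swap p
    · intro p _; exact hsym p.1 p.2
  have hdiag : ∑ p ∈ Finset.univ.filter (fun p : Fin n × Fin n => p.1 = p.2), F p.1 p.2
      = ∑ i, F i i := by
    refine Finset.sum_nbij' (i := fun p => p.1) (j := fun i => (i, i)) ?_ ?_ ?_ ?_ ?_
    · intro p _; exact Finset.mem_univ _
    · intro i _; simp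
    · intro p hp
      simp only [Finset.mem_filter, Finset.mem_univ, true_and] at hp
      exact Prod.ext rfl hp
    · intro i _; rfl
    · intro p hp
      simp only [Finset.mem_filter, Finset.mem_univ, true_and] at hp
      rw [← hp]
  rw [e1, e2, hdiag, hswap] at h3
  rw [h1] at h2
  have h4 : ∑ p ∈ Finset.univ.filter (fun p : Fin n × Fin n => p.1 < p.2), F p.1 p.2
      = ∑ p ∈ pairFinset n, F p.1 p.2 := rfl
  rw [h4] at h2
  linarith


lemma card_pairFinset (n : ℕ) : ((pairFinset n).card : ℝ) = (n.choose 2 : ℝ) := by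
  have h := sum_pairs_eq (n := n) (fun _ _ => (1 : ℝ)) (fun _ _ => rfl)
  simp only [Finset.sum_const, Finset.card_univ, Fintype.card_fin, nsmul_eq_mul,
    mul_one] at h
  rw [Nat.cast_choose_two]
  nlinarith [h]


lemma card_pairFinset_nat (n : ℕ) : (pairFinset n).card = n.choose 2 := by
  have := card_pairFinset n
  exact_mod_cast this


lemma polar_pair (a b : ℝ) :
    a = ‖(⟨a, b⟩ : ℂ)‖ * Real.cos (Complex.arg ⟨a, b⟩) ∧
    b = ‖(⟨a, b⟩ : ℂ)‖ * Real.sin (Complex.arg ⟨a, b⟩) := by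
  by_cases h : (⟨a, b⟩ : ℂ) = 0
  · have ha : a = 0 := congrArg Complex.re h
    have hb : b = 0 := congrArg Complex.im h
    simp [ha, hb, h]
  · have hc := Complex.cos_arg h
    have hs := Complex.sin_arg (⟨a, b⟩ : ℂ)
    have habs : (‖(⟨a, b⟩ : ℂ)‖) ≠ 0 := by
      simpa using h
    constructor
    · rw [hc]; field_simp
    · rw [hs]; field_simp


lemma kacUpdate_apply_fst {i j : Fin n} (hij : i ≠ j) (φ : ℝ) (y : Fin n → ℝ) :
    kacUpdate n i j φ y i
      = ‖(⟨y i, y j⟩ : ℂ)‖ * Real.cos (Complex.arg ⟨y i, y j⟩ + φ) := by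
  obtain ⟨h1, h2⟩ := polar_pair (y i) (y j)
  simp only [kacUpdate, eq_self_iff_true, if_true]
  rw [Real.cos_add]
  linear_combination Real.cos φ * h1 - Real.sin φ * h2


lemma kacUpdate_apply_snd {i j : Fin n} (hij : i ≠ j) (φ : ℝ) (y : Fin n → ℝ) :
    kacUpdate n i j φ y j
      = ‖(⟨y i, y j⟩ : ℂ)‖ * Real.sin (Complex.arg ⟨y i, y j⟩ + φ) := by
  obtain ⟨h1, h2⟩ := polar_pair (y i) (y j)
  simp only [kacUpdate, eq_self_iff_true, if_true, if_neg hij.symm]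
  rw [Real.sin_add]
  linear_combination Real.sin φ * h1 + Real.cos φ * h2


lemma kacUpdate_apply_other {i j k : Fin n} (hki : k ≠ i) (hkj : k ≠ j) (φ : ℝ)
    (y : Fin n → ℝ) : kacUpdate n i j φ y k = y k := by
  simp [kacUpdate, if_neg hki, if_neg hkj]


lemma abs_sq_pair (a b : ℝ) : (‖(⟨a, b⟩ : ℂ)‖) ^ 2 = a ^ 2 + b ^ 2 := by
  rw [Complex.sq_norm, Complex.normSq_mk]; ring

/-- splitting a sum that differs from another only at two coordinates -/

lemma sum_two_diff {i j : Fin n} (hij : i ≠ j) (u v : Fin n → ℝ)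
    (h : ∀ k, k ≠ i → k ≠ j → u k = v k) :
    ∑ k, u k = (∑ k, v k) + (u i - v i) + (u j - v j) := by
  classical
  have key : ∑ k, (u k - v k) = (u i - v i) + (u j - v j) := by
    rw [← Finset.sum_subset (Finset.subset_univ ({i, j} : Finset (Fin n)))]
    · exact Finset.sum_pair hij
    · intro k _ hk
      simp only [Finset.mem_insert, Finset.mem_singleton] at hk
      push_neg at hk
      rw [h k hk.1 hk.2, sub_self]
  have h2 : ∑ k, (u k - v k) = ∑ k, u k - ∑ k, v k := Finset.sum_sub_distrib _ _
  linarith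


lemma sum_sq_kacUpdate {i j : Fin n} (hij : i ≠ j) (φ : ℝ) (x : Fin n → ℝ) :
    ∑ k, (kacUpdate n i j φ x k) ^ 2 = ∑ k, x k ^ 2 := by
  rw [sum_two_diff hij (fun k => (kacUpdate n i j φ x k) ^ 2) (fun k => x k ^ 2)
    (fun k hki hkj =>
      show kacUpdate n i j φ x k ^ 2 = x k ^ 2 by rw [kacUpdate_apply_other hki hkj])]
  simp only [kacUpdate, eq_self_iff_true, if_true, if_neg hij.symm]
  have h := Real.sin_sq_add_cos_sq φ
  linear_combination (x i ^ 2 + x j ^ 2) * h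


lemma cos4_sin4 (x : ℝ) :
    Real.cos x ^ 4 + Real.sin x ^ 4 = 3 / 4 + (1 / 4) * Real.cos (4 * x) := by
  have h1 := Real.sin_sq_add_cos_sq x
  have h2 : Real.cos (2 * x) = 2 * Real.cos x ^ 2 - 1 := Real.cos_two_mul x
  have h3 : Real.cos (4 * x) = 2 * Real.cos (2 * x) ^ 2 - 1 := by
    have := Real.cos_two_mul (2 * x)
    rw [show 2 * (2 * x) = 4 * x by ring] at this
    exact this
  nlinarith [h1, h2, h3]


lemma trig_int (γ : ℝ) :
    ∫ θ in (0:ℝ)..(2 * Real.pi),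
      (Real.cos (γ + θ) ^ 4 + Real.sin (γ + θ) ^ 4) = 3 * Real.pi / 2 := by
  have hper : Function.Periodic (fun x => Real.cos x ^ 4 + Real.sin x ^ 4)
      (2 * Real.pi) := by
    intro x
    simp [Real.cos_add_two_pi, Real.sin_add_two_pi]
  rw [intervalIntegral.integral_comp_add_left
      (fun x => Real.cos x ^ 4 + Real.sin x ^ 4) γ]
  rw [show γ + 0 = γ from add_zero γ, hper.intervalIntegral_add_eq γ 0, zero_add]
  have h1 : ∀ x : ℝ, Real.cos x ^ 4 + Real.sin x ^ 4
      = 3 / 4 + (1 / 4) * Real.cos (4 * x) := cos4_sin4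
  rw [intervalIntegral.integral_congr (g := fun x => 3 / 4 + (1/4) * Real.cos (4*x))
    (fun x _ => h1 x)]
  rw [intervalIntegral.integral_add (intervalIntegrable_const)
    ((by fun_prop : Continuous fun x : ℝ => (1/4) * Real.cos (4 * x)).intervalIntegrable _ _)]
  rw [intervalIntegral.integral_const]
  rw [intervalIntegral.integral_const_mul]
  rw [intervalIntegral.integral_comp_mul_left (fun x => Real.cos x) (by norm_num : (4:ℝ) ≠ 0)]
  simp only [mul_zero, integral_cos, Real.sin_zero, smul_eq_mul]
  have : Real.sin (4 * (2 * Real.pi)) = 0 := by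
    have := Real.sin_nat_mul_pi 8
    rw [show ((8:ℕ):ℝ) * Real.pi = 4 * (2 * Real.pi) by push_cast; ring] at this
    exact this
  rw [this]
  ring



lemma uniformPairs_eq (n : ℕ) :
    uniformPairs n = (n.choose 2 : ℝ≥0∞)⁻¹ • ∑ p ∈ pairFinset n, Measure.dirac p := rfl

def ang (x : Fin n → ℝ) (p : Fin n × Fin n) : ℝ := Complex.arg ⟨x p.1, x p.2⟩

def offA (z : Z n) (p : Fin n × Fin n) : ℝ := ang z.1 p - ang z.2 p

def Hm (n : ℕ) : Z n × ((Fin n × Fin n) × ℝ) → Z n := fun w =>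
  (kacUpdate n w.2.1.1 w.2.1.2 w.2.2 w.1.1,
   kacUpdate n w.2.1.1 w.2.1.2 (w.2.2 + offA w.1 w.2.1) w.1.2)

def base (n : ℕ) : Measure ((Fin n × Fin n) × ℝ) := (uniformPairs n).prod uniformAngle

def fZ (z : Z n) : ℝ := ∑ k, (z.1 k ^ 2 - z.2 k ^ 2) ^ 2

def dd (z : Z n) (k : Fin n) : ℝ := z.1 k ^ 2 - z.2 k ^ 2

/- measurability helpers -/

lemma measurable_pair_uncurry {α γ : Type*} [MeasurableSpace α] [MeasurableSpace γ]
    {F : (Fin n × Fin n) × α → γ} (h : ∀ p, Measurable fun a => F (p, a)) :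
    Measurable F := by
  have h2 : Measurable fun q : α × (Fin n × Fin n) => F (q.2, q.1) :=
    measurable_from_prod_countable_left (fun p => h p)
  have hF : F = (fun q : α × (Fin n × Fin n) => F (q.2, q.1)) ∘ Prod.swap := by
    funext q; rfl
  rw [hF]; exact h2.comp measurable_swap

lemma measurable_kacU {Ω : Type*} [MeasurableSpace Ω] (i j : Fin n) {ψ : Ω → ℝ}
    {v : Ω → Fin n → ℝ} (hψ : Measurable ψ) (hv : Measurable v) :
    Measurable fun ω => kacUpdate n i j (ψ ω) (v ω) := by
  unfold kacUpdate
  refine measurable_pi_lambda _ fun k => ?_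
  by_cases h1 : k = i
  · simp only [h1, eq_self_iff_true, if_true]
    fun_prop
  · simp only [if_neg h1]
    by_cases h2 : k = j
    · simp only [h2, eq_self_iff_true, if_true]
      fun_prop
    · simp only [if_neg h2]
      fun_prop

lemma measurable_ang (p : Fin n × Fin n) : Measurable fun x : Fin n → ℝ => ang x p := by
  apply Complex.measurable_arg.comp
  have : (fun x : Fin n → ℝ => (⟨x p.1, x p.2⟩ : ℂ))
      = fun x : Fin n → ℝ => ((x p.1 : ℂ) + (x p.2 : ℂ) * Complex.I) := by
    funext x
    exact Complex.mk_eq_add_mul_I ..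
  rw [this]
  fun_prop

lemma measurable_offA (p : Fin n × Fin n) : Measurable fun z : Z n => offA z p :=
  ((measurable_ang p).comp measurable_fst).sub ((measurable_ang p).comp measurable_snd)

lemma measurable_Hm : Measurable (Hm n) := by
  have key : Measurable fun w : (Fin n × Fin n) × (Z n × ℝ) => Hm n (w.2.1, (w.1, w.2.2)) := by
    apply measurable_pair_uncurry
    intro p
    refine Measurable.prodMk ?_ ?_
    · exact measurable_kacU p.1 p.2 measurable_snd (measurable_fst.comp measurable_fst)
    · exact measurable_kacU p.1 p.2
        (measurable_snd.add ((measurable_offA p).comp measurable_fst))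
        (measurable_snd.comp measurable_fst)
  have : Hm n = (fun w : (Fin n × Fin n) × (Z n × ℝ) => Hm n (w.2.1, (w.1, w.2.2)))
      ∘ (fun w : Z n × ((Fin n × Fin n) × ℝ) => (w.2.1, (w.1, w.2.2))) := by
    funext w; rfl
  rw [this]
  exact key.comp (by fun_prop)

lemma measurable_Hmz (z : Z n) : Measurable fun q : (Fin n × Fin n) × ℝ => Hm n (z, q) :=
  measurable_Hm.comp (measurable_const.prodMk measurable_id)

lemma measurable_fZ : Measurable (fZ (n := n)) := by
  unfold fZ
  fun_prop

/- probability instances -/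

instance : IsProbabilityMeasure uniformAngle := by
  constructor
  rw [uniformAngle, Measure.smul_apply, Measure.restrict_apply_univ, Real.volume_Ico,
    sub_zero, smul_eq_mul]
  exact ENNReal.inv_mul_cancel (by simp [Real.pi_pos]) ENNReal.ofReal_ne_top

lemma uniformPairs_prob (hn : 2 ≤ n) : IsProbabilityMeasure (uniformPairs n) := by
  constructor
  rw [uniformPairs_eq, Measure.smul_apply, Measure.finset_sum_apply, smul_eq_mul]
  simp only [measure_univ, Finset.sum_const, nsmul_eq_mul, mul_one]
  rw [card_pairFinset_nat]
  refine ENNReal.inv_mul_cancel ?_ (ENNReal.natCast_ne_top _)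
  exact_mod_cast (Nat.choose_pos hn).ne' 

lemma base_prob (hn : 2 ≤ n) : IsProbabilityMeasure (base n) := by
  haveI := uniformPairs_prob hn
  unfold base
  infer_instance

/- the shift-invariance of uniformAngle -/

lemma map_shift {Ω : Type*} [MeasurableSpace Ω] {G : ℝ → Ω} (hG : Measurable G)
    (hper : Function.Periodic G (2 * Real.pi)) (c : ℝ) :
    Measure.map (fun θ => G (θ + c)) uniformAngle = Measure.map G uniformAngle := by
  haveI hπ : Fact (0 < 2 * Real.pi) := ⟨Real.two_pi_pos⟩
  have hIoc : uniformAngle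
      = (ENNReal.ofReal (2 * Real.pi))⁻¹ • volume.restrict (Set.Ioc 0 (2 * Real.pi)) := by
    rw [uniformAngle, Measure.restrict_congr_set Ico_ae_eq_Ioc]
  rw [hIoc, Measure.map_smul, Measure.map_smul]
  congr 1
  have hmk : Measure.map (QuotientAddGroup.mk : ℝ → AddCircle (2 * Real.pi))
      (volume.restrict (Set.Ioc 0 (2 * Real.pi))) = volume := by
    have := (AddCircle.measurePreserving_mk (2 * Real.pi) 0).map_eq
    rwa [zero_add] at this
  set g : AddCircle (2 * Real.pi) → Ω := hper.lift with hg
  have hmeas_g : Measurable g := by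
    rw [QuotientAddGroup.measurable_from_quotient]
    have : g ∘ (QuotientAddGroup.mk : ℝ → AddCircle (2 * Real.pi)) = G := by
      funext a; exact hper.lift_coe a
    rw [this]; exact hG
  have h1 : Measure.map G (volume.restrict (Set.Ioc 0 (2 * Real.pi)))
      = Measure.map g volume := by
    rw [← hmk, Measure.map_map hmeas_g AddCircle.measurable_mk']
    have hco : g ∘ (QuotientAddGroup.mk : ℝ → AddCircle (2 * Real.pi)) = G :=
      funext fun a => hper.lift_coe a
    rw [hco]
  have hshift : (fun θ : ℝ => G (θ + c))
      = (fun ω : AddCircle (2 * Real.pi) => g (ω + (c : AddCircle (2 * Real.pi))))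
        ∘ (QuotientAddGroup.mk : ℝ → AddCircle (2 * Real.pi)) := by
    funext θ
    show G (θ + c) = g (((θ : AddCircle (2 * Real.pi))) + (c : AddCircle (2 * Real.pi)))
    rw [← QuotientAddGroup.mk_add]
    exact (hper.lift_coe (θ + c)).symm
  have h2 : Measure.map (fun θ : ℝ => G (θ + c))
      (volume.restrict (Set.Ioc 0 (2 * Real.pi))) = Measure.map g volume := by
    have hinv : Measure.map (fun ω : AddCircle (2 * Real.pi) =>
        ω + (c : AddCircle (2 * Real.pi))) volume = volume := by
      have hc : (fun ω : AddCircle (2 * Real.pi) => ω + (c : AddCircle (2 * Real.pi)))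
          = fun ω => (c : AddCircle (2 * Real.pi)) + ω := by
        funext ω; exact add_comm _ _
      rw [hc]
      exact MeasureTheory.Measure.IsAddLeftInvariant.map_add_left_eq_self _
    have hcomp : (fun ω : AddCircle (2 * Real.pi) => g (ω + (c : AddCircle (2 * Real.pi))))
        = g ∘ (fun ω : AddCircle (2 * Real.pi) => ω + (c : AddCircle (2 * Real.pi))) := rfl
    rw [hshift]
    rw [show ((fun ω => g (ω + (c : AddCircle (2 * Real.pi))))
        ∘ (QuotientAddGroup.mk : ℝ → AddCircle (2 * Real.pi)))
        = (g ∘ fun ω : AddCircle (2 * Real.pi) => ω + (c : AddCircle (2 * Real.pi)))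
          ∘ (QuotientAddGroup.mk : ℝ → AddCircle (2 * Real.pi)) from rfl]
    rw [← Measure.map_map (hmeas_g.comp (measurable_add_const _))
      AddCircle.measurable_mk', hmk,
      ← Measure.map_map hmeas_g (measurable_add_const _), hinv]
  rw [h1, h2]


/- the coupling measure -/

def Qc (n : ℕ) (z : Z n) : Measure (Z n) :=
  Measure.map (fun q => Hm n (z, q)) (base n)

lemma kacUpdate_periodic (y : Fin n → ℝ) (i j : Fin n) :
    Function.Periodic (fun θ => kacUpdate n i j θ y) (2 * Real.pi) := by
  intro θ
  funext k
  simp [kacUpdate, Real.cos_add_two_pi, Real.sin_add_two_pi]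

lemma Qc_fst (z : Z n) : Measure.map Prod.fst (Qc n z) = kacKernel n z.1 := by
  unfold Qc kacKernel base
  rw [Measure.map_map measurable_fst (measurable_Hmz z)]
  rfl

lemma map_offset (y : Fin n → ℝ) (c : Fin n × Fin n → ℝ) :
    Measure.map (fun q : (Fin n × Fin n) × ℝ => kacUpdate n q.1.1 q.1.2 (q.2 + c q.1) y)
      (base n) = kacKernel n y := by
  unfold kacKernel base
  have hmeas1 : Measurable fun q : (Fin n × Fin n) × ℝ =>
      kacUpdate n q.1.1 q.1.2 (q.2 + c q.1) y :=
    measurable_pair_uncurry fun p =>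
      measurable_kacU p.1 p.2 (measurable_add_const (c p)) measurable_const
  have hmeas2 : Measurable fun q : (Fin n × Fin n) × ℝ => kacUpdate n q.1.1 q.1.2 q.2 y :=
    measurable_pair_uncurry fun p => measurable_kacU p.1 p.2 measurable_id measurable_const
  refine Measure.ext fun A hA => ?_
  rw [Measure.map_apply hmeas1 hA, Measure.map_apply hmeas2 hA,
      Measure.prod_apply (hmeas1 hA), Measure.prod_apply (hmeas2 hA)]
  refine lintegral_congr fun p => ?_
  have hGm : Measurable fun θ => kacUpdate n p.1 p.2 θ y :=
    measurable_kacU p.1 p.2 measurable_id measurable_const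
  have hG2 : Measurable fun θ => kacUpdate n p.1 p.2 (θ + c p) y :=
    measurable_kacU p.1 p.2 (measurable_add_const (c p)) measurable_const
  have key : Measure.map (fun θ => kacUpdate n p.1 p.2 (θ + c p) y) uniformAngle
      = Measure.map (fun θ => kacUpdate n p.1 p.2 θ y) uniformAngle :=
    map_shift hGm (kacUpdate_periodic y p.1 p.2) (c p)
  have e1 : (Prod.mk p ⁻¹' ((fun q : (Fin n × Fin n) × ℝ =>
      kacUpdate n q.1.1 q.1.2 (q.2 + c q.1) y) ⁻¹' A))
      = (fun θ => kacUpdate n p.1 p.2 (θ + c p) y) ⁻¹' A := rfl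
  have e2 : (Prod.mk p ⁻¹' ((fun q : (Fin n × Fin n) × ℝ =>
      kacUpdate n q.1.1 q.1.2 q.2 y) ⁻¹' A))
      = (fun θ => kacUpdate n p.1 p.2 θ y) ⁻¹' A := rfl
  rw [e1, e2, ← Measure.map_apply hG2 hA, ← Measure.map_apply hGm hA, key]

lemma Qc_snd (z : Z n) : Measure.map Prod.snd (Qc n z) = kacKernel n z.2 := by
  unfold Qc
  rw [Measure.map_map measurable_snd (measurable_Hmz z)]
  exact map_offset z.2 (offA z)


lemma fZ_Hm (z : Z n) {p : Fin n × Fin n} (hp : p.1 < p.2) (θ : ℝ) :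
    fZ (Hm n (z, (p, θ))) = fZ z - dd z p.1 ^ 2 - dd z p.2 ^ 2
      + (dd z p.1 + dd z p.2) ^ 2 *
        (Real.cos (ang z.1 p + θ) ^ 4 + Real.sin (ang z.1 p + θ) ^ 4) := by
  have hij : p.1 ≠ p.2 := ne_of_lt hp
  have hXi : kacUpdate n p.1 p.2 θ z.1 p.1
      = ‖(⟨z.1 p.1, z.1 p.2⟩ : ℂ)‖ * Real.cos (ang z.1 p + θ) :=
    kacUpdate_apply_fst hij θ z.1
  have hXj : kacUpdate n p.1 p.2 θ z.1 p.2
      = ‖(⟨z.1 p.1, z.1 p.2⟩ : ℂ)‖ * Real.sin (ang z.1 p + θ) :=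
    kacUpdate_apply_snd hij θ z.1
  have hang : Complex.arg ⟨z.2 p.1, z.2 p.2⟩ + (θ + offA z p) = ang z.1 p + θ := by
    unfold offA ang; ring
  have hYi : kacUpdate n p.1 p.2 (θ + offA z p) z.2 p.1
      = ‖(⟨z.2 p.1, z.2 p.2⟩ : ℂ)‖ * Real.cos (ang z.1 p + θ) := by
    rw [kacUpdate_apply_fst hij _ z.2, hang]
  have hYj : kacUpdate n p.1 p.2 (θ + offA z p) z.2 p.2
      = ‖(⟨z.2 p.1, z.2 p.2⟩ : ℂ)‖ * Real.sin (ang z.1 p + θ) := by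
    rw [kacUpdate_apply_snd hij _ z.2, hang]
  have hax := abs_sq_pair (z.1 p.1) (z.1 p.2)
  have hay := abs_sq_pair (z.2 p.1) (z.2 p.2)
  have hother : ∀ k, k ≠ p.1 → k ≠ p.2 →
      ((kacUpdate n p.1 p.2 θ z.1 k) ^ 2
        - (kacUpdate n p.1 p.2 (θ + offA z p) z.2 k) ^ 2) ^ 2
      = (z.1 k ^ 2 - z.2 k ^ 2) ^ 2 := by
    intro k hki hkj
    rw [kacUpdate_apply_other hki hkj, kacUpdate_apply_other hki hkj]
  have hsplit := sum_two_diff hij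
    (fun k => ((kacUpdate n p.1 p.2 θ z.1 k) ^ 2
      - (kacUpdate n p.1 p.2 (θ + offA z p) z.2 k) ^ 2) ^ 2)
    (fun k => (z.1 k ^ 2 - z.2 k ^ 2) ^ 2) hother
  show (∑ k, ((kacUpdate n p.1 p.2 θ z.1 k) ^ 2
      - (kacUpdate n p.1 p.2 (θ + offA z p) z.2 k) ^ 2) ^ 2) = _
  rw [hsplit]
  beta_reduce
  unfold fZ dd
  rw [hXi, hXj, hYi, hYj]
  set c := Real.cos (ang z.1 p + θ)
  set s := Real.sin (ang z.1 p + θ)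
  set ra := ‖(⟨z.1 p.1, z.1 p.2⟩ : ℂ)‖
  set sa := ‖(⟨z.2 p.1, z.2 p.2⟩ : ℂ)‖
  have h1 : (ra * c) ^ 2 - (sa * c) ^ 2
      = ((z.1 p.1 ^ 2 - z.2 p.1 ^ 2) + (z.1 p.2 ^ 2 - z.2 p.2 ^ 2)) * c ^ 2 := by
    linear_combination c ^ 2 * hax - c ^ 2 * hay
  have h2 : (ra * s) ^ 2 - (sa * s) ^ 2
      = ((z.1 p.1 ^ 2 - z.2 p.1 ^ 2) + (z.1 p.2 ^ 2 - z.2 p.2 ^ 2)) * s ^ 2 := by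
    linear_combination s ^ 2 * hax - s ^ 2 * hay
  rw [h1, h2]
  ring

/- the one-step contraction -/

def SS (n : ℕ) : Set (Z n) := {z | (∑ k, z.1 k ^ 2) = 1 ∧ (∑ k, z.2 k ^ 2) = 1}

lemma measurableSet_SS : MeasurableSet (SS n) := by
  have h1 : Measurable fun z : Z n => ∑ k, z.1 k ^ 2 := by fun_prop
  have h2 : Measurable fun z : Z n => ∑ k, z.2 k ^ 2 := by fun_prop
  exact (h1 (measurableSet_singleton 1)).inter (h2 (measurableSet_singleton 1))

lemma sum_dd_sq_pair_le (z : Z n) {p : Fin n × Fin n} (hp : p.1 < p.2) :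
    dd z p.1 ^ 2 + dd z p.2 ^ 2 ≤ fZ z := by
  have hsub : ({p.1, p.2} : Finset (Fin n)) ⊆ Finset.univ := Finset.subset_univ _
  have := Finset.sum_le_sum_of_subset_of_nonneg hsub
    (fun k _ _ => sq_nonneg ((z.1 k ^ 2 - z.2 k ^ 2)))
  rw [Finset.sum_pair (ne_of_lt hp)] at this
  exact this

lemma val_nonneg (z : Z n) {p : Fin n × Fin n} (hp : p.1 < p.2) :
    0 ≤ fZ z - dd z p.1 ^ 2 - dd z p.2 ^ 2 + (dd z p.1 + dd z p.2) ^ 2 * (3 / 4) := by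
  have h1 := sum_dd_sq_pair_le z hp
  nlinarith [sq_nonneg (dd z p.1 + dd z p.2)]

lemma inner_integral (z : Z n) {p : Fin n × Fin n} (hp : p.1 < p.2) :
    ∫⁻ θ, ENNReal.ofReal (fZ (Hm n (z, (p, θ)))) ∂uniformAngle
      = ENNReal.ofReal (fZ z - dd z p.1 ^ 2 - dd z p.2 ^ 2
          + (dd z p.1 + dd z p.2) ^ 2 * (3 / 4)) := by
  have hIoc : uniformAngle
      = (ENNReal.ofReal (2 * Real.pi))⁻¹ • volume.restrict (Set.Ioc 0 (2 * Real.pi)) := by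
    rw [uniformAngle, Measure.restrict_congr_set Ico_ae_eq_Ioc]
  simp only [fZ_Hm z hp]
  rw [hIoc, lintegral_smul_measure]
  set γ := ang z.1 p
  set K := fZ z - dd z p.1 ^ 2 - dd z p.2 ^ 2 with hK
  set D := dd z p.1 + dd z p.2 with hD
  have hKnn : 0 ≤ K := by
    have := sum_dd_sq_pair_le z hp
    rw [hK]; linarith
  have hcont : Continuous fun θ : ℝ =>
      K + D ^ 2 * (Real.cos (γ + θ) ^ 4 + Real.sin (γ + θ) ^ 4) := by fun_prop
  have hint : IntegrableOn (fun θ : ℝ =>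
      K + D ^ 2 * (Real.cos (γ + θ) ^ 4 + Real.sin (γ + θ) ^ 4))
      (Set.Ioc 0 (2 * Real.pi)) volume :=
    (hcont.integrableOn_Icc (a := 0) (b := 2 * Real.pi)).mono_set Set.Ioc_subset_Icc_self
  have hnn : 0 ≤ᶠ[ae (volume.restrict (Set.Ioc 0 (2 * Real.pi)))]
      fun θ : ℝ => K + D ^ 2 * (Real.cos (γ + θ) ^ 4 + Real.sin (γ + θ) ^ 4) := by
    refine Filter.Eventually.of_forall fun θ => ?_
    simp only [Pi.zero_apply]
    have h2 : (0:ℝ) ≤ D ^ 2 * (Real.cos (γ + θ) ^ 4 + Real.sin (γ + θ) ^ 4) := by positivity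
    linarith
  rw [← ofReal_integral_eq_lintegral_ofReal hint hnn]
  rw [← intervalIntegral.integral_of_le Real.two_pi_pos.le]
  rw [intervalIntegral.integral_add intervalIntegrable_const
    ((by fun_prop : Continuous fun θ : ℝ =>
      D ^ 2 * (Real.cos (γ + θ) ^ 4 + Real.sin (γ + θ) ^ 4)).intervalIntegrable _ _)]
  rw [intervalIntegral.integral_const, intervalIntegral.integral_const_mul, trig_int γ]
  have harith : (2 * Real.pi - 0) • K + D ^ 2 * (3 * Real.pi / 2)
      = (2 * Real.pi) * (K + D ^ 2 * (3 / 4)) := by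
    rw [smul_eq_mul]; ring
  rw [harith, ENNReal.ofReal_mul Real.two_pi_pos.le, smul_eq_mul, ← mul_assoc,
    ENNReal.inv_mul_cancel (by simp [Real.pi_pos]) ENNReal.ofReal_ne_top, one_mul]

lemma fZ_nonneg (z : Z n) : 0 ≤ fZ z :=
  Finset.sum_nonneg fun k _ => sq_nonneg _

lemma fZ_eq_sum_dd (z : Z n) : fZ z = ∑ k, dd z k ^ 2 := rfl

lemma sum_val_le (hn : 2 ≤ n) {z : Z n} (hz : z ∈ SS n) :
    ∑ p ∈ pairFinset n, (fZ z - dd z p.1 ^ 2 - dd z p.2 ^ 2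
        + (dd z p.1 + dd z p.2) ^ 2 * (3 / 4))
      ≤ (n.choose 2 : ℝ) * ((1 - 1 / (2 * (n : ℝ))) * fZ z) := by
  have hd0 : ∑ k, dd z k = 0 := by
    unfold dd
    rw [Finset.sum_sub_distrib, hz.1, hz.2, sub_self]
  have hF1 := sum_pairs_eq (n := n) (fun i j => dd z i ^ 2 + dd z j ^ 2)
    (fun i j => by ring)
  have hF2 := sum_pairs_eq (n := n) (fun i j => dd z i * dd z j)
    (fun i j => by ring)
  beta_reduce at hF1 hF2
  have hsum1 : ∑ i, ∑ j, (dd z i ^ 2 + dd z j ^ 2) = 2 * (n : ℝ) * fZ z := by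
    have h1 : ∀ i : Fin n, ∑ j, (dd z i ^ 2 + dd z j ^ 2)
        = (n : ℝ) * dd z i ^ 2 + fZ z := by
      intro i
      rw [Finset.sum_add_distrib, Finset.sum_const, Finset.card_univ, Fintype.card_fin,
        nsmul_eq_mul, fZ_eq_sum_dd]
    rw [Finset.sum_congr rfl fun i _ => h1 i, Finset.sum_add_distrib, Finset.sum_const,
      Finset.card_univ, Fintype.card_fin, nsmul_eq_mul, ← Finset.mul_sum,
      ← fZ_eq_sum_dd]
    ring
  have hsum2 : ∑ i, ∑ j, (dd z i * dd z j) = 0 := by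
    rw [← Finset.sum_mul_sum, hd0, mul_zero]
  have hdiag1 : ∑ i, (dd z i ^ 2 + dd z i ^ 2) = 2 * fZ z := by
    rw [fZ_eq_sum_dd, Finset.mul_sum]
    exact Finset.sum_congr rfl fun i _ => by ring
  have hdiag2 : ∑ i, dd z i * dd z i = fZ z := by
    rw [fZ_eq_sum_dd]
    exact Finset.sum_congr rfl fun i _ => (sq (dd z i)).symm
  rw [hsum1, hdiag1] at hF1
  rw [hsum2, hdiag2] at hF2
  have hS1 : ∑ p ∈ pairFinset n, (dd z p.1 ^ 2 + dd z p.2 ^ 2)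
      = ((n:ℝ) - 1) * fZ z := by linarith
  have hS2 : ∑ p ∈ pairFinset n, (dd z p.1 * dd z p.2) = -(fZ z) / 2 := by linarith
  have hval : ∀ p : Fin n × Fin n, fZ z - dd z p.1 ^ 2 - dd z p.2 ^ 2
        + (dd z p.1 + dd z p.2) ^ 2 * (3 / 4)
      = fZ z - (1/4) * (dd z p.1 ^ 2 + dd z p.2 ^ 2)
        + (3/2) * (dd z p.1 * dd z p.2) := fun p => by ring
  rw [Finset.sum_congr rfl fun p _ => hval p, Finset.sum_add_distrib,
    Finset.sum_sub_distrib, Finset.sum_const, ← Finset.mul_sum, ← Finset.mul_sum,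
    nsmul_eq_mul, hS1, hS2, card_pairFinset, Nat.cast_choose_two]
  have hN : (2:ℝ) ≤ (n:ℝ) := by exact_mod_cast hn
  have hNne : (n:ℝ) ≠ 0 := by linarith
  have expand : (n:ℝ) * ((n:ℝ) - 1) / 2 * ((1 - 1 / (2 * (n:ℝ))) * fZ z)
      = (n:ℝ) * ((n:ℝ) - 1) / 2 * fZ z - (((n:ℝ) - 1) / 4) * fZ z := by
    field_simp
    ring
  rw [expand]
  have hfz := fZ_nonneg z
  nlinarith [hfz]

lemma one_step (hn : 2 ≤ n) {z : Z n} (hz : z ∈ SS n) :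
    ∫⁻ w, ENNReal.ofReal (fZ w) ∂(Qc n z)
      ≤ ENNReal.ofReal (1 - 1 / (2 * (n : ℝ))) * ENNReal.ofReal (fZ z) := by
  haveI := uniformPairs_prob hn
  have hg : Measurable fun w : Z n => ENNReal.ofReal (fZ w) :=
    measurable_fZ.ennreal_ofReal
  unfold Qc
  rw [lintegral_map hg (measurable_Hmz z)]
  show ∫⁻ q, ENNReal.ofReal (fZ (Hm n (z, q))) ∂((uniformPairs n).prod uniformAngle) ≤ _
  rw [lintegral_prod (fun q => ENNReal.ofReal (fZ (Hm n (z, q))))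
    ((hg.comp (measurable_Hmz z)).aemeasurable)]
  rw [uniformPairs_eq, lintegral_smul_measure, lintegral_finset_sum_measure]
  simp only [lintegral_dirac]
  have hmem : ∀ p ∈ pairFinset n, p.1 < p.2 := by
    intro p hp
    simpa [pairFinset, Finset.mem_filter] using hp
  rw [Finset.sum_congr rfl fun p hp => inner_integral z (hmem p hp)]
  rw [← ENNReal.ofReal_sum_of_nonneg fun p hp => val_nonneg z (hmem p hp)]
  have hc : (1:ℝ) - 1 / (2 * (n:ℝ)) ≥ 0 := by
    have hn2 : (2:ℝ) ≤ (n:ℝ) := by exact_mod_cast hn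
    have : (0:ℝ) < 2 * (n:ℝ) := by linarith
    rw [ge_iff_le, sub_nonneg, div_le_one this]
    linarith
  have hC0 : ((n.choose 2 : ℕ) : ℝ≥0∞) ≠ 0 := by
    exact_mod_cast (Nat.choose_pos hn).ne'
  calc ((n.choose 2 : ℕ) : ℝ≥0∞)⁻¹ * ENNReal.ofReal (∑ p ∈ pairFinset n,
        (fZ z - dd z p.1 ^ 2 - dd z p.2 ^ 2 + (dd z p.1 + dd z p.2) ^ 2 * (3 / 4)))
      ≤ ((n.choose 2 : ℕ) : ℝ≥0∞)⁻¹ * ENNReal.ofReal ((n.choose 2 : ℝ)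
          * ((1 - 1 / (2 * (n : ℝ))) * fZ z)) := by
        exact mul_le_mul_right (ENNReal.ofReal_le_ofReal (sum_val_le hn hz)) _
    _ = ((n.choose 2 : ℕ) : ℝ≥0∞)⁻¹ * (((n.choose 2 : ℕ) : ℝ≥0∞)
          * ENNReal.ofReal ((1 - 1 / (2 * (n : ℝ))) * fZ z)) := by
        rw [ENNReal.ofReal_mul (by positivity), ENNReal.ofReal_natCast]
    _ = ENNReal.ofReal ((1 - 1 / (2 * (n : ℝ))) * fZ z) := by
        rw [← mul_assoc, ENNReal.inv_mul_cancel hC0 (ENNReal.natCast_ne_top _), one_mul]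
    _ = ENNReal.ofReal (1 - 1 / (2 * (n : ℝ))) * ENNReal.ofReal (fZ z) :=
        ENNReal.ofReal_mul hc


/- support propagation -/

lemma Hm_mem_SS {z : Z n} (hz : z ∈ SS n) {p : Fin n × Fin n} (hp : p.1 < p.2) (θ : ℝ) :
    Hm n (z, (p, θ)) ∈ SS n := by
  constructor
  · show ∑ k, (kacUpdate n p.1 p.2 θ z.1 k) ^ 2 = 1
    rw [sum_sq_kacUpdate (ne_of_lt hp)]
    exact hz.1
  · show ∑ k, (kacUpdate n p.1 p.2 (θ + offA z p) z.2 k) ^ 2 = 1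
    rw [sum_sq_kacUpdate (ne_of_lt hp)]
    exact hz.2

lemma Qc_compl_SS {z : Z n} (hz : z ∈ SS n) : Qc n z ((SS n)ᶜ) = 0 := by
  unfold Qc base
  rw [Measure.map_apply (measurable_Hmz z) measurableSet_SS.compl]
  rw [Measure.prod_apply ((measurable_Hmz z) measurableSet_SS.compl)]
  rw [uniformPairs_eq, lintegral_smul_measure, lintegral_finset_sum_measure]
  simp only [lintegral_dirac]
  have hzero : ∀ p ∈ pairFinset n,
      uniformAngle (Prod.mk p ⁻¹' ((fun q => Hm n (z, q)) ⁻¹' (SS n)ᶜ)) = 0 := by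
    intro p hp
    have hplt : p.1 < p.2 := by simpa [pairFinset, Finset.mem_filter] using hp
    have hempty : (Prod.mk p ⁻¹' ((fun q => Hm n (z, q)) ⁻¹' (SS n)ᶜ)) = ∅ := by
      ext θ
      simp only [Set.mem_preimage, Set.mem_compl_iff, Set.mem_empty_iff_false,
        iff_false, not_not]
      exact Hm_mem_SS hz hplt θ
    rw [hempty, measure_empty]
  rw [Finset.sum_congr rfl hzero]
  simp

/- the coupling as a kernel -/

def coupleK (n : ℕ) (hn : 2 ≤ n) : ProbabilityTheory.Kernel (Z n) (Z n) :=
  haveI := base_prob (n := n) hn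
  ProbabilityTheory.Kernel.map
    (ProbabilityTheory.Kernel.prod ProbabilityTheory.Kernel.id
      (ProbabilityTheory.Kernel.const (Z n) (base n))) (Hm n)

lemma coupleK_apply (hn : 2 ≤ n) (z : Z n) : coupleK n hn z = Qc n z := by
  haveI := base_prob (n := n) hn
  unfold coupleK Qc
  rw [ProbabilityTheory.Kernel.map_apply _ measurable_Hm]
  rw [ProbabilityTheory.Kernel.prod_apply, ProbabilityTheory.Kernel.id_apply,
    ProbabilityTheory.Kernel.const_apply]
  rw [Measure.dirac_prod, Measure.map_map measurable_Hm measurable_prodMk_left]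
  rfl

/- bound at time zero -/

lemma fZ_le_two {z : Z n} (hz : z ∈ SS n) : fZ z ≤ 2 := by
  have h1 : ∀ k : Fin n, (z.1 k ^ 2 - z.2 k ^ 2) ^ 2 ≤ (z.1 k ^ 2) ^ 2 + (z.2 k ^ 2) ^ 2 :=
    fun k => by nlinarith [sq_nonneg (z.1 k * z.2 k)]
  have h2 : fZ z ≤ ∑ k, ((z.1 k ^ 2) ^ 2 + (z.2 k ^ 2) ^ 2) :=
    Finset.sum_le_sum fun k _ => h1 k
  rw [Finset.sum_add_distrib] at h2
  have h3 : ∑ k, (z.1 k ^ 2) ^ 2 ≤ (∑ k, z.1 k ^ 2) ^ 2 :=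
    Finset.sum_sq_le_sq_sum_of_nonneg fun k _ => sq_nonneg _
  have h4 : ∑ k, (z.2 k ^ 2) ^ 2 ≤ (∑ k, z.2 k ^ 2) ^ 2 :=
    Finset.sum_sq_le_sq_sum_of_nonneg fun k _ => sq_nonneg _
  rw [hz.1] at h3
  rw [hz.2] at h4
  linarith

/- the chain bound by induction -/

lemma chain_bound (hn : 2 ≤ n) {z0 : Z n} (hz0 : z0 ∈ SS n) (t : ℕ) :
    chainLaw (fun z => coupleK n hn z) z0 t ((SS n)ᶜ) = 0 ∧
    ∫⁻ w, ENNReal.ofReal (fZ w) ∂(chainLaw (fun z => coupleK n hn z) z0 t)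
      ≤ ENNReal.ofReal 2 * (ENNReal.ofReal (1 - 1 / (2 * (n : ℝ)))) ^ t := by
  have hgm : Measurable fun w : Z n => ENNReal.ofReal (fZ w) :=
    measurable_fZ.ennreal_ofReal
  have hQmeas : Measurable fun z : Z n => (coupleK n hn) z := (coupleK n hn).measurable
  induction t with
  | zero =>
    constructor
    · show Measure.dirac z0 ((SS n)ᶜ) = 0
      rw [Measure.dirac_apply' _ measurableSet_SS.compl]
      simp [hz0]
    · show ∫⁻ w, ENNReal.ofReal (fZ w) ∂(Measure.dirac z0) ≤ _
      rw [lintegral_dirac' _ hgm]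
      simp only [pow_zero, mul_one]
      exact ENNReal.ofReal_le_ofReal (fZ_le_two hz0)
  | succ t ih =>
    have hae : ∀ᵐ z' ∂(chainLaw (fun z => coupleK n hn z) z0 t), z' ∈ SS n := by
      rw [MeasureTheory.ae_iff]
      exact ih.1
    constructor
    · show ((chainLaw (fun z => coupleK n hn z) z0 t).bind _) ((SS n)ᶜ) = 0
      rw [Measure.bind_apply measurableSet_SS.compl hQmeas.aemeasurable]
      have h0 : ∀ᵐ z' ∂(chainLaw (fun z => coupleK n hn z) z0 t),
          (coupleK n hn) z' ((SS n)ᶜ) = 0 := by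
        filter_upwards [hae] with z' hz'
        rw [coupleK_apply hn z']
        exact Qc_compl_SS hz'
      rw [lintegral_congr_ae h0]
      exact lintegral_zero
    · show ∫⁻ w, ENNReal.ofReal (fZ w)
          ∂((chainLaw (fun z => coupleK n hn z) z0 t).bind _) ≤ _
      rw [Measure.lintegral_bind hQmeas.aemeasurable hgm.aemeasurable]
      have hstep : ∀ᵐ z' ∂(chainLaw (fun z => coupleK n hn z) z0 t),
          (∫⁻ w, ENNReal.ofReal (fZ w) ∂((coupleK n hn) z'))
            ≤ ENNReal.ofReal (1 - 1 / (2 * (n : ℝ))) * ENNReal.ofReal (fZ z') := by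
        filter_upwards [hae] with z' hz'
        rw [coupleK_apply hn z']
        exact one_step hn hz'
      calc ∫⁻ z', (∫⁻ w, ENNReal.ofReal (fZ w) ∂((coupleK n hn) z'))
            ∂(chainLaw (fun z => coupleK n hn z) z0 t)
          ≤ ∫⁻ z', ENNReal.ofReal (1 - 1 / (2 * (n : ℝ))) * ENNReal.ofReal (fZ z')
            ∂(chainLaw (fun z => coupleK n hn z) z0 t) := lintegral_mono_ae hstep
        _ = ENNReal.ofReal (1 - 1 / (2 * (n : ℝ)))
            * ∫⁻ z', ENNReal.ofReal (fZ z')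
              ∂(chainLaw (fun z => coupleK n hn z) z0 t) :=
          lintegral_const_mul _ hgm
        _ ≤ ENNReal.ofReal (1 - 1 / (2 * (n : ℝ)))
            * (ENNReal.ofReal 2 * (ENNReal.ofReal (1 - 1 / (2 * (n : ℝ)))) ^ t) :=
          mul_le_mul_right ih.2 _
        _ = ENNReal.ofReal 2 * (ENNReal.ofReal (1 - 1 / (2 * (n : ℝ)))) ^ (t + 1) := by
          rw [pow_succ]; ring

end Kac

/-- Contraction estimate (Lemma 3.1): for any starting points `X₀, Y₀ ∈ S^{n-1}` there is a
coupling of two copies of Kac's walk (a Markov chain on the product whose two coordinate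
marginal transition laws are the Kac kernel) such that for all `t`,
`E[ ∑ i (X_t i ² − Y_t i ²)² ] ≤ 2 (1 − 1/(2n))^t`. -/
theorem kac_contraction_coupling (n : ℕ) (hn : 2 ≤ n) (X0 Y0 : Fin n → ℝ)
    (hX0 : X0 ∈ unitSphere n) (hY0 : Y0 ∈ unitSphere n) :
    ∃ Q : (Fin n → ℝ) × (Fin n → ℝ) → Measure ((Fin n → ℝ) × (Fin n → ℝ)),
      (∀ z, Measure.map Prod.fst (Q z) = kacKernel n z.1) ∧
      (∀ z, Measure.map Prod.snd (Q z) = kacKernel n z.2) ∧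
      (∀ t : ℕ,
        (∫ z : (Fin n → ℝ) × (Fin n → ℝ),
            (∑ i, (z.1 i ^ 2 - z.2 i ^ 2) ^ 2) ∂(chainLaw Q (X0, Y0) t)) ≤
          2 * (1 - 1 / (2 * (n : ℝ))) ^ t) := by
  refine ⟨fun z => (Kac.coupleK n hn) z, ?_, ?_, ?_⟩
  · intro z
    show Measure.map Prod.fst ((Kac.coupleK n hn) z) = kacKernel n z.1
    rw [Kac.coupleK_apply hn z]
    exact Kac.Qc_fst z
  · intro z
    show Measure.map Prod.snd ((Kac.coupleK n hn) z) = kacKernel n z.2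
    rw [Kac.coupleK_apply hn z]
    exact Kac.Qc_snd z
  · intro t
    have hz0 : (X0, Y0) ∈ Kac.SS n := ⟨hX0, hY0⟩
    have hb := (Kac.chain_bound hn hz0 t).2
    have hc : (0:ℝ) ≤ 1 - 1 / (2 * (n : ℝ)) := by
      have hn2 : (2:ℝ) ≤ (n:ℝ) := by exact_mod_cast hn
      have hpos : (0:ℝ) < 2 * (n:ℝ) := by linarith
      rw [sub_nonneg, div_le_one hpos]
      linarith
    have hbound : (0:ℝ) ≤ 2 * (1 - 1 / (2 * (n : ℝ))) ^ t :=
      mul_nonneg (by norm_num) (pow_nonneg hc t)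
    have hint_eq : (∫ z : (Fin n → ℝ) × (Fin n → ℝ),
        (∑ i, (z.1 i ^ 2 - z.2 i ^ 2) ^ 2)
          ∂(chainLaw (fun z => (Kac.coupleK n hn) z) (X0, Y0) t))
        = (∫⁻ z, ENNReal.ofReal (Kac.fZ z)
            ∂(chainLaw (fun z => (Kac.coupleK n hn) z) (X0, Y0) t)).toReal :=
      integral_eq_lintegral_of_nonneg_ae
        (Filter.Eventually.of_forall fun z => Kac.fZ_nonneg z)
        Kac.measurable_fZ.aestronglyMeasurable
    rw [hint_eq]
    apply ENNReal.toReal_le_of_le_ofReal hbound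
    refine le_trans hb ?_
    rw [ENNReal.ofReal_mul (by norm_num : (0:ℝ) ≤ 2), ← ENNReal.ofReal_pow hc]

end
end

section
/- Small values lemma (Lemma 3.2): Let n ≥ 2 and let Y be a random point distributed according to the uniform (Haar) probability measure μ on S^{n-1}. Then for every real c > 1 and every coordinate 1 ≤ i ≤ n, P[ Y[i]^2 ≤ n^{−3c} ] ≤ 2·n^{−c+1}. -/
open MeasureTheory Finset

noncomputable section

/-! ### Auxiliary: the uniform measure on `[-1,1]` -/

def nuM : Measure ℝ := (2⁻¹ : ENNReal) • (volume.restrict (Set.Icc (-1:ℝ) 1))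

instance : IsProbabilityMeasure nuM := by
  constructor
  rw [nuM, Measure.smul_apply, Measure.restrict_apply MeasurableSet.univ, Set.univ_inter,
    Real.volume_Icc, smul_eq_mul, show (1:ℝ) - -1 = 2 by norm_num, ENNReal.ofReal_ofNat]
  exact ENNReal.inv_mul_cancel (by norm_num) (by norm_num)

lemma nuM_le_volume (s : Set ℝ) (hs : MeasurableSet s) : nuM s ≤ 2⁻¹ * volume s := by
  rw [nuM, Measure.smul_apply, smul_eq_mul]
  exact mul_le_mul_right ((Measure.restrict_apply hs).trans_le
    (measure_mono Set.inter_subset_left)) _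

lemma nuM_interval (c b a r : ℝ) (hc : c ≠ 0) (ha : 0 ≤ a) (hr : |c|⁻¹ ≤ r) :
    nuM {t : ℝ | |c * t + b| ≤ a} ≤ ENNReal.ofReal (a * r) := by
  have hkey : ∀ lo hi : ℝ, {t : ℝ | |c * t + b| ≤ a} = Set.Icc lo hi →
      hi - lo ≤ 2 * (a * r) →
      nuM {t : ℝ | |c * t + b| ≤ a} ≤ ENNReal.ofReal (a * r) := by
    intro lo hi hset hlen
    rw [hset]
    refine le_trans (nuM_le_volume _ measurableSet_Icc) ?_
    rw [Real.volume_Icc]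
    calc 2⁻¹ * ENNReal.ofReal (hi - lo) ≤ 2⁻¹ * ENNReal.ofReal (2 * (a * r)) :=
          mul_le_mul_right (ENNReal.ofReal_le_ofReal hlen) _
      _ = 2⁻¹ * (2 * ENNReal.ofReal (a * r)) := by
          rw [ENNReal.ofReal_mul (by norm_num), ENNReal.ofReal_ofNat]
      _ = ENNReal.ofReal (a * r) := by
          rw [← mul_assoc, ENNReal.inv_mul_cancel (by norm_num) (by norm_num), one_mul]
  have har : a * |c|⁻¹ ≤ a * r := mul_le_mul_of_nonneg_left hr ha
  rcases lt_or_gt_of_ne hc with hneg | hpos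
  · refine hkey ((a - b) / c) ((-a - b) / c) ?_ ?_
    · ext t
      simp only [Set.mem_setOf_eq, Set.mem_Icc, abs_le]
      constructor
      · rintro ⟨h1, h2⟩
        constructor
        · rw [div_le_iff_of_neg hneg]; linarith
        · rw [le_div_iff_of_neg hneg]; linarith
      · rintro ⟨h1, h2⟩
        rw [div_le_iff_of_neg hneg] at h1
        rw [le_div_iff_of_neg hneg] at h2
        constructor <;> linarith
    · rw [div_sub_div_same, show -a - b - (a - b) = -(2*a) from by ring,
        show (-(2*a))/c = 2*(a*|c|⁻¹) from by rw [abs_of_neg hneg, inv_neg]; ring]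
      linarith
  · refine hkey ((-a - b) / c) ((a - b) / c) ?_ ?_
    · ext t
      simp only [Set.mem_setOf_eq, Set.mem_Icc, abs_le]
      constructor
      · rintro ⟨h1, h2⟩
        constructor
        · rw [div_le_iff₀ hpos]; linarith
        · rw [le_div_iff₀ hpos]; linarith
      · rintro ⟨h1, h2⟩
        rw [div_le_iff₀ hpos] at h1
        rw [le_div_iff₀ hpos] at h2
        constructor <;> linarith
    · rw [div_sub_div_same, show a - b - (-a - b) = 2*a from by ring,
        show (2*a)/c = 2*(a*|c|⁻¹) from by rw [abs_of_pos hpos]; ring]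
      linarith

/-! ### Auxiliary: Householder reflections -/

variable {n : ℕ}

/-- Householder reflection associated to a vector `v`, with `S = ∑ v m ^ 2`. -/
def hhm (v : Fin n → ℝ) : Matrix (Fin n) (Fin n) ℝ :=
  Matrix.of fun k l => (if k = l then (1:ℝ) else 0) - 2 / (∑ m, v m ^ 2) * (v k * v l)

lemma hhm_symm (v : Fin n → ℝ) (k l : Fin n) : hhm v k l = hhm v l k := by
  simp only [hhm, Matrix.of_apply]
  rw [if_congr (Iff.intro Eq.symm Eq.symm) rfl rfl]
  ring

lemma hhm_mul_self (v : Fin n → ℝ) (hS : (∑ m, v m ^ 2) ≠ 0) :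
    hhm v * hhm v = 1 := by
  set S := ∑ m, v m ^ 2 with hSdef
  ext k l
  rw [Matrix.mul_apply, Matrix.one_apply]
  have expand : ∀ m ∈ Finset.univ, hhm v k m * hhm v m l =
      ((if k = m then (1:ℝ) else 0) * (if m = l then (1:ℝ) else 0)
        - (if k = m then (1:ℝ) else 0) * (2 / S * (v m * v l)))
      - ((if m = l then (1:ℝ) else 0) * (2 / S * (v k * v m))
        - (2 / S) * (2 / S) * (v k * v l) * v m ^ 2) := by
    intro m _
    simp only [hhm, Matrix.of_apply]
    ring
  rw [Finset.sum_congr rfl expand]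
  rw [Finset.sum_sub_distrib, Finset.sum_sub_distrib, Finset.sum_sub_distrib]
  have h1 : ∑ m, (if k = m then (1:ℝ) else 0) * (if m = l then (1:ℝ) else 0)
      = if k = l then (1:ℝ) else 0 := by
    rw [Finset.sum_eq_single k]
    · simp
    · intro b _ hb; simp [Ne.symm hb]
    · simp
  have h2 : ∑ m, (if k = m then (1:ℝ) else 0) * (2 / S * (v m * v l))
      = 2 / S * (v k * v l) := by
    rw [Finset.sum_eq_single k] <;> simp_all [Ne.symm]
  have h3 : ∑ m, (if m = l then (1:ℝ) else 0) * (2 / S * (v k * v m))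
      = 2 / S * (v k * v l) := by
    rw [Finset.sum_eq_single l] <;> simp_all
  have h4 : ∑ m, (2 / S) * (2 / S) * (v k * v l) * v m ^ 2
      = (2 / S) * (2 / S) * (v k * v l) * S := by
    rw [← Finset.mul_sum]
  rw [h1, h2, h3, h4]
  field_simp
  split <;> ring

lemma hhm_mem (v : Fin n → ℝ) (hS : (∑ m, v m ^ 2) ≠ 0) :
    hhm v ∈ Matrix.orthogonalGroup (Fin n) ℝ := by
  rw [Matrix.mem_orthogonalGroup_iff]
  have hstar : star (hhm v) = hhm v := by
    ext k l
    simp only [Matrix.star_apply, star_trivial]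
    exact hhm_symm v l k
  rw [show (hhm v).transpose = hhm v from by ext k l; exact hhm_symm v l k]
  exact hhm_mul_self v hS


lemma hh_sumsq (w : Fin n → ℝ) (i : Fin n) (hw : ∑ m, w m ^ 2 = 1) :
    ∑ m, (w m - if m = i then (1:ℝ) else 0) ^ 2 = 2 * (1 - w i) := by
  have expand : ∀ m ∈ Finset.univ, (w m - if m = i then (1:ℝ) else 0) ^ 2
      = w m ^ 2 + (if m = i then 1 - 2 * w m else 0) := by
    intro m _; split <;> ring
  rw [Finset.sum_congr rfl expand, Finset.sum_add_distrib, hw, Finset.sum_ite_eq' Finset.univ i]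
  simp; ring

lemma hh_row (w : Fin n → ℝ) (i : Fin n) (hw : ∑ m, w m ^ 2 = 1) (hwi : w i ≠ 1)
    (y : Fin n → ℝ) :
    (hhm (fun m => w m - if m = i then (1:ℝ) else 0)).mulVec y i = ∑ m, w m * y m := by
  have h1 : 1 - w i ≠ 0 := sub_ne_zero.mpr (Ne.symm hwi)
  have step : (hhm (fun m => w m - if m = i then (1:ℝ) else 0)).mulVec y i
      = ∑ l, hhm (fun m => w m - if m = i then (1:ℝ) else 0) i l * y l := by
    rfl
  rw [step]
  have expand : ∀ l ∈ Finset.univ,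
      hhm (fun m => w m - if m = i then (1:ℝ) else 0) i l * y l
      = (if i = l then y l else 0) + (w l * y l - (if l = i then (1:ℝ) else 0) * y l) := by
    intro l _
    simp only [hhm, Matrix.of_apply, hh_sumsq w i hw, if_pos rfl]
    by_cases h : l = i
    · subst h; simp only [if_pos rfl, ↓reduceIte]
      field_simp
      ring
    · simp only [if_neg h, if_neg (Ne.symm h), ↓reduceIte]
      field_simp
      ring
  rw [Finset.sum_congr rfl expand, Finset.sum_add_distrib, Finset.sum_sub_distrib]
  rw [Finset.sum_ite_eq Finset.univ i (fun l => y l)]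
  have : ∑ l, (if l = i then (1:ℝ) else 0) * y l = y i := by
    rw [Finset.sum_eq_single i] <;> simp_all
  rw [this]
  simp

/-! ### Small-ball estimate for the product measure -/

lemma gamma_smallball (n : ℕ) (hn : 0 < n) (y : Fin n → ℝ) (hy : ∑ m, y m ^ 2 = 1)
    (a : ℝ) (ha : 0 ≤ a) :
    Measure.pi (fun _ : Fin n => nuM) {g : Fin n → ℝ | |∑ m, y m * g m| ≤ a}
      ≤ ENNReal.ofReal (a * Real.sqrt n) := by
  -- find a big coordinate
  obtain ⟨j, hj⟩ : ∃ j, (1:ℝ) ≤ (n:ℝ) * y j ^ 2 := by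
    by_contra h
    push_neg at h
    have hne : (Finset.univ : Finset (Fin n)).Nonempty := ⟨⟨0, hn⟩, Finset.mem_univ _⟩
    have hnpos : (0:ℝ) < n := Nat.cast_pos.mpr hn
    have hlt : ∑ m, y m ^ 2 < ∑ _m : Fin n, (1:ℝ)/n := by
      refine Finset.sum_lt_sum_of_nonempty hne fun m _ => ?_
      rw [lt_div_iff₀ hnpos]
      have := h m
      nlinarith
    rw [Finset.sum_const, Finset.card_univ, Fintype.card_fin, nsmul_eq_mul,
      mul_one_div, div_self (ne_of_gt hnpos)] at hlt
    linarith
  set c := y j with hcdef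
  have hnpos : (0:ℝ) < n := Nat.cast_pos.mpr hn
  have hc : c ≠ 0 := by
    intro h0
    rw [h0] at hj
    simp at hj
    linarith
  have hcabs : (0:ℝ) < |c| := abs_pos.mpr hc
  have hr : |c|⁻¹ ≤ Real.sqrt n := by
    have h1 : (1:ℝ) ≤ Real.sqrt n * |c| := by
      by_contra hlt
      push_neg at hlt
      have hx0 : 0 ≤ Real.sqrt n * |c| := mul_nonneg (Real.sqrt_nonneg _) (abs_nonneg _)
      have hsq : (Real.sqrt n * |c|)^2 < 1 := by nlinarith
      rw [mul_pow, Real.sq_sqrt hnpos.le, sq_abs] at hsq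
      linarith
    have h2 := mul_le_mul_of_nonneg_left h1 (inv_nonneg.mpr (abs_nonneg c))
    rw [mul_one] at h2
    calc |c|⁻¹ ≤ |c|⁻¹ * (Real.sqrt n * |c|) := h2
      _ = Real.sqrt n := by field_simp
  -- measurability
  have hsum : Measurable fun g : Fin n → ℝ => ∑ m, y m * g m :=
    Finset.measurable_sum _ fun m _ => by fun_prop
  have hS' : MeasurableSet {g : Fin n → ℝ | |∑ m, y m * g m| ≤ a} :=
    measurableSet_le hsum.abs measurable_const
  set f : (Fin n → ℝ) → ENNReal :=
    ({g : Fin n → ℝ | |∑ m, y m * g m| ≤ a}).indicator (fun _ => (1:ENNReal)) with hfdef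
  have hfmeas : Measurable f := measurable_const.indicator hS'
  have key : ∀ x : Fin n → ℝ,
      (∫⁻ t, f (Function.update x j t) ∂nuM) ≤ ENNReal.ofReal (a * Real.sqrt n) := by
    intro x
    set b := ∑ m ∈ Finset.univ \ {j}, y m * x m with hbdef
    have hrw : ∀ t : ℝ, f (Function.update x j t)
        = ({t : ℝ | |c * t + b| ≤ a}).indicator (fun _ => (1:ENNReal)) t := by
      intro t
      have hfun : (fun m => y m * Function.update x j t m)
          = Function.update (fun m => y m * x m) j (c * t) := by
        funext m
        by_cases hm : m = j
        · subst hm; simp [hcdef]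
        · simp [Function.update_apply, hm]
      have hsum_eq : ∑ m, y m * Function.update x j t m = c * t + b := by
        rw [hfun, Finset.sum_update_of_mem (Finset.mem_univ j)]
      simp only [hfdef, Set.indicator_apply, Set.mem_setOf_eq, hsum_eq]
    have hT : MeasurableSet {t : ℝ | |c * t + b| ≤ a} :=
      measurableSet_le ((((measurable_id.const_mul c).add_const b)).abs) measurable_const
    rw [lintegral_congr hrw, lintegral_indicator hT, setLIntegral_one]
    exact nuM_interval c b a (Real.sqrt n) hc ha hr
  calc Measure.pi (fun _ : Fin n => nuM) {g : Fin n → ℝ | |∑ m, y m * g m| ≤ a}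
      = ∫⁻ g, f g ∂(Measure.pi fun _ : Fin n => nuM) := (lintegral_indicator_one hS').symm
    _ = (∫⋯∫⁻_Finset.univ, f ∂(fun _ : Fin n => nuM)) (fun _ => 0) :=
        lintegral_eq_lmarginal_univ _
    _ = (∫⋯∫⁻_(Finset.univ.erase j),
          (fun x => ∫⁻ t, f (Function.update x j t) ∂nuM) ∂(fun _ : Fin n => nuM))
          (fun _ => 0) := by
        rw [lmarginal_erase' _ hfmeas (Finset.mem_univ j)]
    _ ≤ (∫⋯∫⁻_(Finset.univ.erase j),
          (fun _ => ENNReal.ofReal (a * Real.sqrt n)) ∂(fun _ : Fin n => nuM))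
          (fun _ => 0) := lmarginal_mono (fun x => key x) _
    _ = ENNReal.ofReal (a * Real.sqrt n) := by
        rw [MeasureTheory.lmarginal]
        simp

/-- Small values lemma (Lemma 3.2): if `Y` is distributed according to the uniform (Haar)
probability measure on `S^{n-1}` (characterized as a rotation-invariant probability measure
supported on the sphere), then for every `c > 1` and every coordinate `i`,
`P[Y i ² ≤ n^{−3c}] ≤ 2 n^{−c+1}`. -/
theorem kac_small_values (n : ℕ) (hn : 2 ≤ n) (μ : Measure (Fin n → ℝ))
    [IsProbabilityMeasure μ] (hsupp : μ (unitSphere n)ᶜ = 0)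
    (hinv : ∀ O : Matrix.orthogonalGroup (Fin n) ℝ,
      Measure.map (fun x => Matrix.mulVec (O : Matrix (Fin n) (Fin n) ℝ) x) μ = μ)
    (c : ℝ) (hc : 1 < c) (i : Fin n) :
    (μ {y : Fin n → ℝ | y i ^ 2 ≤ (n : ℝ) ^ (-(3 * c))}).toReal ≤ 2 * (n : ℝ) ^ (-c + 1) := by
  have hn0 : 0 < n := lt_of_lt_of_le (by norm_num) hn
  have hnR : (0:ℝ) < n := Nat.cast_pos.mpr hn0
  set ε : ℝ := (n : ℝ) ^ (-(3 * c)) with hεdef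
  have hε : 0 < ε := Real.rpow_pos_of_pos hnR _
  set A : Set (Fin n → ℝ) := {y | y i ^ 2 ≤ ε} with hAdef
  have hA : MeasurableSet A :=
    measurableSet_le ((measurable_pi_apply i).pow_const 2) measurable_const
  set γ : Measure (Fin n → ℝ) := Measure.pi (fun _ : Fin n => nuM) with hγdef
  haveI : IsProbabilityMeasure γ := by rw [hγdef]; infer_instance
  -- a coordinate different from i
  haveI : Nontrivial (Fin n) := Fin.nontrivial_iff_two_le.mpr hn
  obtain ⟨j, hij⟩ := exists_ne i
  -- the direction field
  set w : (Fin n → ℝ) → Fin n → ℝ := fun g m => g m / Real.sqrt (∑ k, g k ^ 2) with hwdef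
  -- measurability of the product event
  have hwm : Measurable fun p : (Fin n → ℝ) × (Fin n → ℝ) => ∑ m, w p.1 m * p.2 m := by
    apply Finset.measurable_sum
    intro m _
    exact (((measurable_pi_apply m).comp measurable_fst).div
      ((Finset.measurable_sum _ fun k _ =>
        ((measurable_pi_apply k).comp measurable_fst).pow_const 2).sqrt)).mul
      ((measurable_pi_apply m).comp measurable_snd)
  set E : Set ((Fin n → ℝ) × (Fin n → ℝ)) := {p | (∑ m, w p.1 m * p.2 m) ^ 2 ≤ ε} with hEdef
  have hE : MeasurableSet E := measurableSet_le (hwm.pow_const 2) measurable_const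
  -- the null set of bad g's
  have hGc : γ {g : Fin n → ℝ | g j = 0} = 0 := by
    have hset : {g : Fin n → ℝ | g j = 0}
        = Set.pi Set.univ (fun m => if m = j then ({0} : Set ℝ) else Set.univ) := by
      ext g
      simp only [Set.mem_setOf_eq, Set.mem_pi, Set.mem_univ, forall_true_left]
      constructor
      · intro h m
        by_cases hm : m = j
        · subst hm; simp [h]
        · simp [hm]
      · intro h
        have := h j
        simpa using this
    have h0 : nuM ({0} : Set ℝ) = 0 := by
      rw [nuM, Measure.smul_apply, smul_eq_mul,
        Measure.restrict_apply (measurableSet_singleton _)]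
      rw [measure_mono_null Set.inter_subset_left (Real.volume_singleton), mul_zero]
    rw [hset, hγdef, Measure.pi_pi]
    exact Finset.prod_eq_zero (Finset.mem_univ j) (by simp [h0])
  -- invariance: for good g the section has measure μ A
  have hInv : ∀ g : Fin n → ℝ, g j ≠ 0 → μ (Prod.mk g ⁻¹' E) = μ A := by
    intro g hgj
    have hSpos : 0 < ∑ k, g k ^ 2 := by
      have h1 : g j ^ 2 ≤ ∑ k, g k ^ 2 :=
        Finset.single_le_sum (fun k _ => sq_nonneg (g k)) (Finset.mem_univ j)
      have h2 : 0 < g j ^ 2 := by positivity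
      linarith
    have hN : 0 < Real.sqrt (∑ k, g k ^ 2) := Real.sqrt_pos.mpr hSpos
    have hw_unit : ∑ m, w g m ^ 2 = 1 := by
      simp only [hwdef, div_pow]
      rw [← Finset.sum_div, Real.sq_sqrt hSpos.le, div_self (ne_of_gt hSpos)]
    have hwj : w g j ≠ 0 := by
      simp only [hwdef]
      exact div_ne_zero hgj (ne_of_gt hN)
    have hwi : w g i ≠ 1 := by
      intro h1
      have h2 : ∑ m ∈ ({i, j} : Finset (Fin n)), w g m ^ 2 ≤ ∑ m, w g m ^ 2 :=
        Finset.sum_le_sum_of_subset_of_nonneg (Finset.subset_univ _)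
          (fun m _ _ => sq_nonneg _)
      rw [Finset.sum_pair hij.symm, hw_unit, h1] at h2
      have h3 : w g j ^ 2 ≤ 0 := by linarith
      exact hwj (by nlinarith [sq_nonneg (w g j)])
    set v : Fin n → ℝ := fun m => w g m - if m = i then (1:ℝ) else 0 with hvdef
    have hS : (∑ m, v m ^ 2) ≠ 0 := by
      rw [hvdef, hh_sumsq (w g) i hw_unit]
      have : (1:ℝ) - w g i ≠ 0 := sub_ne_zero.mpr (Ne.symm hwi)
      positivity
    have hmv : Measurable fun x : Fin n → ℝ => (hhm v).mulVec x := by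
      apply measurable_pi_lambda
      intro k
      have : (fun x : Fin n → ℝ => (hhm v).mulVec x k)
          = fun x => ∑ l, hhm v k l * x l := rfl
      rw [this]
      exact Finset.measurable_sum _ fun l _ => (measurable_pi_apply l).const_mul _
    have hmap := hinv ⟨hhm v, hhm_mem v hS⟩
    have hpre : (fun x : Fin n → ℝ => (hhm v).mulVec x) ⁻¹' A = Prod.mk g ⁻¹' E := by
      ext y
      simp only [Set.mem_preimage, hAdef, Set.mem_setOf_eq, hEdef, hvdef]
      rw [hh_row (w g) i hw_unit hwi y]
    calc μ (Prod.mk g ⁻¹' E) = μ ((fun x : Fin n → ℝ => (hhm v).mulVec x) ⁻¹' A) := by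
          rw [hpre]
      _ = (Measure.map (fun x : Fin n → ℝ => (hhm v).mulVec x) μ) A :=
          (Measure.map_apply hmv hA).symm
      _ = μ A := by rw [hmap]
  -- identity μ A = ∫ γ-section
  have hae_g : ∀ᵐ g ∂γ, g j ≠ 0 := by
    rw [ae_iff]
    simpa using hGc
  have h1 : ∫⁻ g, μ (Prod.mk g ⁻¹' E) ∂γ = μ A := by
    rw [lintegral_congr_ae (hae_g.mono fun g hg => hInv g hg), lintegral_const,
      measure_univ, mul_one]
  have h2 : (γ.prod μ) E = μ A := by rw [Measure.prod_apply hE]; exact h1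
  have h3 : (γ.prod μ) E = ∫⁻ y, γ ((fun g => (g, y)) ⁻¹' E) ∂μ :=
    Measure.prod_apply_symm hE
  -- bound the γ-sections for y on the sphere
  set B : ENNReal := ENNReal.ofReal (Real.sqrt ε * n) with hBdef
  have hsec : ∀ y : Fin n → ℝ, y ∈ unitSphere n → γ ((fun g => (g, y)) ⁻¹' E) ≤ B := by
    intro y hy
    have hyu : ∑ m, y m ^ 2 = 1 := hy
    set a : ℝ := Real.sqrt ε * Real.sqrt n with hadef
    have ha : 0 ≤ a := mul_nonneg (Real.sqrt_nonneg _) (Real.sqrt_nonneg _)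
    set Q : Set (Fin n → ℝ) := Set.pi Set.univ (fun _ => Set.Icc (-1:ℝ) 1) with hQdef
    have hQm : MeasurableSet Q := MeasurableSet.univ_pi fun _ => measurableSet_Icc
    have hQ1 : γ Q = 1 := by
      rw [hQdef, hγdef, Measure.pi_pi]
      have : nuM (Set.Icc (-1:ℝ) 1) = 1 := by
        rw [nuM, Measure.smul_apply, smul_eq_mul,
          Measure.restrict_apply measurableSet_Icc, Set.inter_self, Real.volume_Icc,
          show (1:ℝ) - -1 = 2 by norm_num, ENNReal.ofReal_ofNat]
        exact ENNReal.inv_mul_cancel (by norm_num) (by norm_num)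
      simp [this]
    have hQc : γ Qᶜ = 0 := by
      rw [measure_compl hQm (by rw [hQ1]; exact ENNReal.one_ne_top), hQ1, measure_univ, tsub_self]
    have hsubset : (fun g => (g, y)) ⁻¹' E
        ⊆ {g : Fin n → ℝ | g j = 0} ∪ (Qᶜ ∪ {g : Fin n → ℝ | |∑ m, y m * g m| ≤ a}) := by
      intro g hg
      by_cases hgj : g j = 0
      · exact Or.inl hgj
      by_cases hgQ : g ∈ Q
      · right; right
        simp only [Set.mem_preimage, hEdef, Set.mem_setOf_eq] at hg
        have hSpos : 0 < ∑ k, g k ^ 2 := by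
          have h1' : g j ^ 2 ≤ ∑ k, g k ^ 2 :=
            Finset.single_le_sum (fun k _ => sq_nonneg (g k)) (Finset.mem_univ j)
          have h2' : 0 < g j ^ 2 := by positivity
          linarith
        have hN : 0 < Real.sqrt (∑ k, g k ^ 2) := Real.sqrt_pos.mpr hSpos
        have hsum_eq : ∑ m, w g m * y m
            = (∑ m, g m * y m) / Real.sqrt (∑ k, g k ^ 2) := by
          have e : ∀ m ∈ Finset.univ,
              w g m * y m = (g m * y m) / Real.sqrt (∑ k, g k ^ 2) := by
            intro m _; simp only [hwdef]; ring
          rw [Finset.sum_congr rfl e, ← Finset.sum_div]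
        have hSn : ∑ k, g k ^ 2 ≤ n := by
          have : ∀ k ∈ Finset.univ, g k ^ 2 ≤ 1 := by
            intro k _
            have hk := hgQ k (Set.mem_univ k)
            simp only [Set.mem_Icc] at hk
            nlinarith [hk.1, hk.2]
          calc ∑ k, g k ^ 2 ≤ ∑ _k : Fin n, (1:ℝ) := Finset.sum_le_sum this
            _ = n := by simp
        have hsq : (∑ m, g m * y m) ^ 2 ≤ ε * n := by
          rw [hsum_eq, div_pow] at hg
          rw [div_le_iff₀ (by positivity)] at hg
          rw [Real.sq_sqrt hSpos.le] at hg
          nlinarith [hε.le]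
        have habs : |∑ m, y m * g m| ≤ a := by
          have : ∑ m, y m * g m = ∑ m, g m * y m :=
            Finset.sum_congr rfl fun m _ => mul_comm _ _
          rw [this, ← Real.sqrt_sq_eq_abs, hadef, ← Real.sqrt_mul hε.le]
          exact Real.sqrt_le_sqrt hsq
        exact habs
      · exact Or.inr (Or.inl hgQ)
    calc γ ((fun g => (g, y)) ⁻¹' E)
        ≤ γ ({g : Fin n → ℝ | g j = 0} ∪ (Qᶜ ∪ {g : Fin n → ℝ | |∑ m, y m * g m| ≤ a})) :=
          measure_mono hsubset
      _ ≤ γ {g : Fin n → ℝ | g j = 0} + (γ Qᶜ + γ {g : Fin n → ℝ | |∑ m, y m * g m| ≤ a}) :=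
          le_trans (measure_union_le _ _) (by gcongr; exact measure_union_le _ _)
      _ ≤ 0 + (0 + ENNReal.ofReal (a * Real.sqrt n)) := by
          rw [hGc, hQc]
          gcongr
          exact gamma_smallball n hn0 y hyu a ha
      _ = ENNReal.ofReal (a * Real.sqrt n) := by rw [zero_add, zero_add]
      _ = B := by
          rw [hadef, hBdef, mul_assoc, Real.mul_self_sqrt (Nat.cast_nonneg n)]
  have hae_y : ∀ᵐ y ∂μ, y ∈ unitSphere n := by
    rw [ae_iff]
    exact hsupp
  have hfinal : μ A ≤ B := by
    rw [← h2, h3]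
    calc ∫⁻ y, γ ((fun g => (g, y)) ⁻¹' E) ∂μ ≤ ∫⁻ _y, B ∂μ :=
          lintegral_mono_ae (hae_y.mono fun y hy => hsec y hy)
      _ = B := by rw [lintegral_const, measure_univ, mul_one]
  -- numerics
  have hreal : Real.sqrt ε * n ≤ 2 * (n:ℝ) ^ (-c + 1) := by
    have e1 : Real.sqrt ε * n = (n:ℝ) ^ (-(3*c) * (1/2) + 1) := by
      rw [hεdef, Real.sqrt_eq_rpow, ← Real.rpow_mul hnR.le,
        Real.rpow_add hnR, Real.rpow_one]
    rw [e1]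
    have e2 : (n:ℝ) ^ (-(3*c) * (1/2) + 1) ≤ (n:ℝ) ^ (-c + 1) := by
      apply Real.rpow_le_rpow_of_exponent_le
      · exact_mod_cast Nat.one_le_cast.mpr hn0
      · linarith
    calc ((n:ℝ) ^ (-(3*c) * (1/2) + 1)) ≤ (n:ℝ) ^ (-c + 1) := e2
      _ ≤ 2 * (n:ℝ) ^ (-c + 1) := by
          nlinarith [Real.rpow_pos_of_pos hnR (-c + 1)]
  have hRHS : (0:ℝ) ≤ 2 * (n:ℝ) ^ (-c + 1) := by positivity
  refine ENNReal.toReal_le_of_le_ofReal hRHS ?_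
  exact le_trans hfinal (by rw [hBdef]; exact ENNReal.ofReal_le_ofReal hreal)

end
end
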